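/- Let f_{m,r,s}(x) = Σ_{n≥1} c_{n,m,r,s} x^n as a formal power series over the rationals, where c_{n,m,r,s} is the number of 210-avoiding ascent sequences of length n with exactly m ascents, largest letter r, and last letter s. Then (1−x)·f_{0,0,0} = x, and for all m ≥ 1 and 1 ≤ r ≤ m, (1−x)·f_{m,r,r} = x·Σ_{j=0}^{r} Σ_{i=0}^{j} f_{m−1,j,i} − x·f_{m−1,r,r}. -/

import Mathlib

/-- Number of ascents of a sequence of non-negative integers:
indices `j` with `x j < x (j+1)`. -/
def ascents (l : List ℕ) : ℕ :=
  ((l.zip l.tail).filter (fun p => p.1 < p.2)).length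

/-- `x` is an ascent sequence: it starts with 0 and each subsequent letter is at most
one more than the number of ascents of the preceding prefix. -/
def IsAscentSeq (x : List ℕ) : Prop :=
  (∀ h : 0 < x.length, x.get ⟨0, h⟩ = 0) ∧
  ∀ i : Fin x.length, 0 < (i : ℕ) → x.get i ≤ ascents (x.take (i : ℕ)) + 1

/-- `p` contains the pattern `t`: `p` has a subsequence order-isomorphic to `t`. -/
def Contains (p t : List ℕ) : Prop :=
  ∃ f : Fin t.length → Fin p.length, StrictMono f ∧
    ∀ i j : Fin t.length, t.get i < t.get j ↔ p.get (f i) < p.get (f j)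

/-- `p` avoids the pattern `t`. -/
def Avoids (p t : List ℕ) : Prop := ¬ Contains p t

/-- `cA n m r s` is the number of 210-avoiding ascent sequences of length `n` with
exactly `m` ascents, largest letter `r`, and last letter `s`. -/
noncomputable def cA (n m r s : ℕ) : ℕ :=
  {x : List ℕ | x.length = n ∧ IsAscentSeq x ∧ Avoids x [2, 1, 0] ∧
    ascents x = m ∧ x.foldr max 0 = r ∧ x.getLast? = some s}.ncard

/-- `fGF m r s = Σ_{n ≥ 1} cA n m r s * x^n`, the generating function of the numbers
`c_{n,m,r,s}` (note `cA 0 m r s = 0`, as the empty list has no last letter);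
any negative index yields `0`. -/
noncomputable def fGF (m r s : ℤ) : PowerSeries ℚ :=
  if 0 ≤ m ∧ 0 ≤ r ∧ 0 ≤ s then
    PowerSeries.mk (fun n => (cA n m.toNat r.toNat s.toNat : ℚ))
  else 0

open PowerSeries

/-!
Removing the last letter `r` of a sequence counted by `c_{n+1,m,r,r}` leaves a 210-avoiding
ascent sequence of length `n` whose letters are all at most `r`; conversely, appending a letter
that dominates all others creates no occurrence of 210, and keeps the ascent condition as long as
`r ≤ asc + 1`. The prefix either ends in `r` (no new ascent; counted by `c_{n,m,r,r}`) or ends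
below `r` (one new ascent; counted by `Σ_{j ≤ r} Σ_{i ≤ j} c_{n,m-1,j,i} - c_{n,m-1,r,r}`).
Hence `c_{n+1,m,r,r} - c_{n,m,r,r} = Σ_{j ≤ r} Σ_{i ≤ j} c_{n,m-1,j,i} - c_{n,m-1,r,r}`,
which is the recurrence read off coefficientwise. For `m = 0` only the constant sequences
`0⋯0` remain.
-/

lemma foldr_max_le_iff {l : List ℕ} {a : ℕ} : l.foldr max 0 ≤ a ↔ ∀ x ∈ l, x ≤ a := by
  induction l with
  | nil => simp
  | cons y l ih => simp [ih]

@[simp] lemma ascents_singleton (a : ℕ) : ascents [a] = 0 := rfl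

lemma ascents_cons_cons (a b : ℕ) (l : List ℕ) :
    ascents (a :: b :: l) = ascents (b :: l) + if a < b then 1 else 0 := by
  by_cases h : a < b <;> simp [ascents, h]

lemma ascents_append_singleton {l : List ℕ} (hl : l ≠ []) (a : ℕ) :
    ascents (l ++ [a]) = ascents l + if l.getLast hl < a then 1 else 0 := by
  induction l with
  | nil => contradiction
  | cons x t ih =>
    cases t with
    | nil => simp only [List.cons_append, List.nil_append, ascents_cons_cons]; rfl
    | cons y s =>
      simp only [List.cons_append, ascents_cons_cons] at ih ⊢
      rw [ih (List.cons_ne_nil _ _), List.getLast_cons_cons]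
      omega

lemma isAscentSeq_iff {x : List ℕ} : IsAscentSeq x ↔
    (∀ h : 0 < x.length, x[0] = 0) ∧
      ∀ i (h : i < x.length), 0 < i → x[i] ≤ ascents (x.take i) + 1 := by
  simp [IsAscentSeq, Fin.forall_iff]

lemma isAscentSeq_append_singleton {l : List ℕ} (hl : l ≠ []) (a : ℕ) :
    IsAscentSeq (l ++ [a]) ↔ IsAscentSeq l ∧ a ≤ ascents l + 1 := by
  have hpos : 0 < l.length := List.length_pos_iff.mpr hl
  simp only [isAscentSeq_iff, List.length_append, List.length_singleton]
  constructor
  · rintro ⟨h0, hs⟩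
    refine ⟨⟨fun h => by simpa [List.getElem_append_left h] using h0 (by omega),
      fun i hi hi0 => ?_⟩, by simpa using hs l.length (by omega) hpos⟩
    simpa [List.getElem_append_left hi, List.take_append_of_le_length hi.le] using
      hs i (by omega) hi0
  · rintro ⟨⟨h0, hs⟩, ha⟩
    refine ⟨fun _ => by simpa [List.getElem_append_left hpos] using h0 hpos, fun i hi hi0 => ?_⟩
    rcases (by omega : i < l.length ∨ i = l.length) with hi' | rfl
    · simpa [List.getElem_append_left hi', List.take_append_of_le_length hi'.le] using
        hs i hi' hi0
    · simpa using ha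

lemma contains_210_iff {p : List ℕ} :
    Contains p [2, 1, 0] ↔ ∃ a b c, c < b ∧ b < a ∧ [a, b, c].Sublist p := by
  simp only [Contains, List.sublist_iff_exists_fin_orderEmbedding_get_eq]
  constructor
  · rintro ⟨f, hf, hiso⟩
    refine ⟨p.get (f 0), p.get (f 1), p.get (f 2), (hiso 2 1).1 (by decide),
      (hiso 1 0).1 (by decide), OrderEmbedding.ofStrictMono f hf, ?_⟩
    intro i; fin_cases i <;> rfl
  · rintro ⟨a, b, c, hcb, hba, f, hf⟩
    refine ⟨f, f.strictMono, ?_⟩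
    have h0 : p[(f 0 : ℕ)] = a := (hf 0).symm
    have h1 : p[(f 1 : ℕ)] = b := (hf 1).symm
    have h2 : p[(f 2 : ℕ)] = c := (hf 2).symm
    intro i j
    fin_cases i <;> fin_cases j <;> simp [h0, h1, h2] <;> omega

lemma avoids_210_append_singleton {l : List ℕ} {a : ℕ} (h : ∀ x ∈ l, x ≤ a) :
    Avoids (l ++ [a]) [2, 1, 0] ↔ Avoids l [2, 1, 0] := by
  simp only [Avoids, contains_210_iff, not_iff_not]
  constructor
  · rintro ⟨x, y, z, hzy, hyx, hs⟩
    obtain ⟨l₁, l₂, heq, h₁, h₂⟩ := List.sublist_append_iff.mp hs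
    rcases List.sublist_singleton.mp h₂ with rfl | rfl
    · exact ⟨x, y, z, hzy, hyx, by simpa [heq] using h₁⟩
    · obtain ⟨rfl, haz⟩ := List.append_inj' (s₂ := [x, y]) (t₂ := [z]) heq.symm rfl
      obtain rfl : a = z := by simpa using haz
      exact absurd (h y (h₁.subset (by simp))) (by omega)
  · rintro ⟨x, y, z, hzy, hyx, hs⟩
    exact ⟨x, y, z, hzy, hyx, hs.trans (List.sublist_append_left _ _)⟩

lemma foldr_max_append_singleton (l : List ℕ) (a : ℕ) :
    (l ++ [a]).foldr max 0 = max (l.foldr max 0) a := by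
  induction l with
  | nil => simp
  | cons y l ih => simp [ih, max_assoc]

lemma finite_setOf_length_eq_forall_le (n R : ℕ) :
    {x : List ℕ | x.length = n ∧ ∀ a ∈ x, a ≤ R}.Finite := by
  refine ((List.finite_length_eq (Fin (R + 1)) n).image (List.map Fin.val)).subset ?_
  rintro x ⟨hn, hR⟩
  refine ⟨x.pmap (fun a ha => (⟨a, Nat.lt_succ_of_le ha⟩ : Fin (R + 1))) hR,
    by simpa using hn, ?_⟩
  simp [List.map_pmap]

lemma Set.Finite.ncard_eq_sum_ncard_fiberwise {α β : Type*} [DecidableEq β] {s : Set α}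
    (hs : s.Finite) {f : α → β} {t : Finset β} (H : s.MapsTo f t) :
    s.ncard = ∑ b ∈ t, {a ∈ s | f a = b}.ncard := by
  rw [Set.ncard_eq_toFinset_card s hs, Finset.card_eq_sum_card_fiberwise (by simpa using H)]
  refine Finset.sum_congr rfl fun b _ => ?_
  rw [Set.ncard_eq_toFinset_card _ (hs.subset (Set.sep_subset _ _))]
  congr 1
  ext; simp

def avoidingAscentSeqs (n m : ℕ) : Set (List ℕ) :=
  {x | x.length = n ∧ IsAscentSeq x ∧ Avoids x [2, 1, 0] ∧ ascents x = m}

def avoidingAscentSeqsWith (n m r s : ℕ) : Set (List ℕ) :=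
  {x ∈ avoidingAscentSeqs n m | x.foldr max 0 = r ∧ x.getLast? = some s}

lemma cA_eq_ncard (n m r s : ℕ) : cA n m r s = (avoidingAscentSeqsWith n m r s).ncard := by
  simp only [cA, avoidingAscentSeqsWith, avoidingAscentSeqs, Set.sep_ofPred, and_assoc]

lemma finite_avoidingAscentSeqs_max_le (n m R : ℕ) :
    {x ∈ avoidingAscentSeqs n m | x.foldr max 0 ≤ R}.Finite :=
  (finite_setOf_length_eq_forall_le n R).subset
    fun _ ⟨⟨hn, _⟩, hR⟩ => ⟨hn, foldr_max_le_iff.mp hR⟩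

lemma ncard_avoidingAscentSeqs_max_le {n : ℕ} (hn : n ≠ 0) (m R : ℕ) :
    {x ∈ avoidingAscentSeqs n m | x.foldr max 0 ≤ R}.ncard
      = ∑ j ∈ Finset.range (R + 1), ∑ i ∈ Finset.range (j + 1), cA n m j i := by
  rw [(finite_avoidingAscentSeqs_max_le n m R).ncard_eq_sum_ncard_fiberwise
    (f := fun x => x.foldr max 0) (t := Finset.range (R + 1))
    fun x hx => Finset.mem_range.2 (Nat.lt_succ_of_le hx.2)]
  refine Finset.sum_congr rfl fun j hj => ?_
  have hmaps :
      {x ∈ {x ∈ avoidingAscentSeqs n m | x.foldr max 0 ≤ R} | x.foldr max 0 = j}.MapsTo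
        List.getLast? ((Finset.range (j + 1)).map ⟨some, Option.some_injective _⟩) := by
    rintro x ⟨⟨⟨hlen, -⟩, -⟩, rfl⟩
    have hx : x ≠ [] := List.ne_nil_of_length_pos (by omega)
    simpa [List.getLast?_eq_some_getLast hx, Nat.lt_succ_iff] using
      foldr_max_le_iff.mp le_rfl _ (List.getLast_mem hx)
  rw [((finite_avoidingAscentSeqs_max_le n m R).subset
    (Set.sep_subset _ _)).ncard_eq_sum_ncard_fiberwise hmaps, Finset.sum_map]
  refine Finset.sum_congr rfl fun i _ => ?_
  rw [cA_eq_ncard]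
  congr 1
  ext x
  simp only [Set.mem_sep_iff, Function.Embedding.coeFn_mk, Finset.mem_range] at hj ⊢
  constructor
  · rintro ⟨⟨⟨hx, -⟩, hmax⟩, hlast⟩
    exact ⟨hx, hmax, hlast⟩
  · rintro ⟨hx, hmax, hlast⟩
    exact ⟨⟨⟨hx, by omega⟩, hmax⟩, hlast⟩

lemma preimage_append_singleton_avoidingAscentSeqsWith {n : ℕ} (hn : n ≠ 0) {M R : ℕ}
    (hR : R ≤ M + 1) :
    (· ++ [R]) ⁻¹' avoidingAscentSeqsWith (n + 1) (M + 1) R R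
      = avoidingAscentSeqsWith n (M + 1) R R ∪
        ({x ∈ avoidingAscentSeqs n M | x.foldr max 0 ≤ R} \
          avoidingAscentSeqsWith n M R R) := by
  ext l
  rcases eq_or_ne l [] with rfl | hl
  · simp [avoidingAscentSeqsWith, avoidingAscentSeqs, hn.symm]
  have hlast := foldr_max_le_iff.mp le_rfl _ (List.getLast_mem hl)
  simp only [Set.mem_preimage, Set.mem_union, Set.mem_sdiff, avoidingAscentSeqsWith,
    avoidingAscentSeqs, Set.mem_ofPred_eq, List.length_append, List.length_singleton,
    isAscentSeq_append_singleton hl, ascents_append_singleton hl, foldr_max_append_singleton,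
    List.getLast?_append, List.getLast?_eq_some_getLast hl]
  by_cases hmax : l.foldr max 0 ≤ R
  · rw [avoids_210_append_singleton (foldr_max_le_iff.mp hmax)]
    split_ifs <;> grind
  · grind

lemma cA_zero_left (m r s : ℕ) : cA 0 m r s = 0 := by
  rw [cA]
  convert Set.ncard_empty (List ℕ)
  refine Set.eq_empty_of_forall_notMem ?_
  rintro x ⟨hx, -, -, -, -, hlast⟩
  simp [List.length_eq_zero_iff.mp hx] at hlast

lemma cA_one_succ (m r s : ℕ) : cA 1 (m + 1) r s = 0 := by
  rw [cA]
  convert Set.ncard_empty (List ℕ)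
  refine Set.eq_empty_of_forall_notMem ?_
  rintro x ⟨hx, -, -, hasc, -⟩
  obtain ⟨a, rfl⟩ := List.length_eq_one_iff.mp hx
  simp at hasc

lemma cA_zero_zero_zero {n : ℕ} (hn : n ≠ 0) : cA n 0 0 0 = 1 := by
  rw [cA]
  convert Set.ncard_singleton (List.replicate n 0)
  ext x
  constructor
  · rintro ⟨hx, -, -, -, hmax, -⟩
    exact List.eq_replicate_iff.mpr
      ⟨hx, fun a ha => Nat.le_zero.mp (foldr_max_le_iff.mp hmax.le a ha)⟩
  · rintro rfl
    refine ⟨by simp, ?_, ?_, ?_, ?_, ?_⟩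
    · simp [isAscentSeq_iff]
    · rw [Avoids, contains_210_iff]
      rintro ⟨a, b, c, hcb, -, hs⟩
      have hb := List.eq_of_mem_replicate (hs.subset (by simp : b ∈ [a, b, c]))
      omega
    · rw [ascents, List.length_eq_zero_iff, List.filter_eq_nil_iff]
      rintro ⟨a, b⟩ h
      simp [List.eq_of_mem_replicate (List.of_mem_zip h).1,
        List.eq_of_mem_replicate (List.mem_of_mem_tail (List.of_mem_zip h).2)]
    · exact Nat.le_zero.mp (foldr_max_le_iff.mpr fun a ha => (List.eq_of_mem_replicate ha).le)
    · simp [List.getLast?_replicate, hn]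

lemma cA_diag_recurrence (n : ℕ) {M R : ℕ} (hR : R ≤ M + 1) :
    cA (n + 1) (M + 1) R R + cA n M R R
      = cA n (M + 1) R R
        + ∑ j ∈ Finset.range (R + 1), ∑ i ∈ Finset.range (j + 1), cA n M j i := by
  rcases eq_or_ne n 0 with rfl | hn
  · simp [cA_zero_left, cA_one_succ]
  have hrange : avoidingAscentSeqsWith (n + 1) (M + 1) R R
      ⊆ Set.range (· ++ [R]) := fun x hx => by
    obtain ⟨y, rfl⟩ := List.getLast?_eq_some_iff.mp hx.2.2
    exact ⟨y, rfl⟩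
  have hdisj : Disjoint (avoidingAscentSeqsWith n (M + 1) R R)
      ({x ∈ avoidingAscentSeqs n M | x.foldr max 0 ≤ R} \
        avoidingAscentSeqsWith n M R R) := by
    rw [Set.disjoint_left]
    rintro x ⟨⟨-, -, -, h₁⟩, -⟩ ⟨⟨⟨-, -, -, h₂⟩, -⟩, -⟩
    omega
  have hsub : avoidingAscentSeqsWith n M R R
      ⊆ {x ∈ avoidingAscentSeqs n M | x.foldr max 0 ≤ R} := fun x hx => ⟨hx.1, hx.2.1.le⟩
  have hfin := finite_avoidingAscentSeqs_max_le n M R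
  have hle := Set.ncard_le_ncard hsub hfin
  rw [cA_eq_ncard, cA_eq_ncard, cA_eq_ncard,
    ← Set.ncard_preimage_of_injective_subset_range (List.append_left_injective [R]) hrange,
    preimage_append_singleton_avoidingAscentSeqsWith hn hR,
    Set.ncard_union_eq hdisj ((finite_avoidingAscentSeqs_max_le n (M + 1) R).subset
      fun x hx => ⟨hx.1, hx.2.1.le⟩) (hfin.subset Set.sdiff_subset),
    Set.ncard_sdiff hsub (hfin.subset hsub), ← ncard_avoidingAscentSeqs_max_le hn]
  omega

lemma sum_Icc_zero_natCast {M : Type*} [AddCommMonoid M] (R : ℕ) (g : ℤ → M) :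
    ∑ j ∈ Finset.Icc (0 : ℤ) R, g j = ∑ j ∈ Finset.range (R + 1), g j := by
  symm
  refine Finset.sum_nbij (↑) (fun j hj => ?_) (fun _ _ _ _ => Int.ofNat_inj.mp)
    (fun j hj => ?_) (fun _ _ => rfl)
  · simp only [Finset.mem_range, Finset.mem_Icc] at hj ⊢
    omega
  · simp only [Finset.coe_Icc, Set.mem_Icc] at hj
    exact ⟨j.toNat, by simp only [Finset.coe_range, Set.mem_Iio]; omega, by simp [hj.1]⟩

lemma fGF_natCast (m r s : ℕ) : fGF m r s = mk fun n => (cA n m r s : ℚ) := by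
  simp [fGF]

lemma one_sub_X_mul_mk_eq_X_mul {R : Type*} [Ring R] {a : ℕ → R} {g : PowerSeries R}
    (h0 : a 0 = 0) (h : ∀ n, a (n + 1) = a n + coeff n g) : (1 - X) * mk a = X * g := by
  ext (_ | n) <;> simp [sub_mul, coeff_succ_X_mul, h0, h]

/-- The initial condition `f_{0,0,0} = x/(1-x)` and the recurrence
`f_{m,r,r} = (x/(1-x)) (Σ_{j=0}^{r} Σ_{i=0}^{j} f_{m-1,j,i} - f_{m-1,r,r})`
for `1 ≤ r ≤ m`, multiplied through by `(1-x)`. -/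
theorem fGF_diagonal_recurrence :
    (1 - X) * fGF 0 0 0 = X ∧
    ∀ m r : ℤ, 1 ≤ m → 1 ≤ r → r ≤ m →
      (1 - X) * fGF m r r
        = X * (∑ j ∈ Finset.Icc 0 r, ∑ i ∈ Finset.Icc 0 j, fGF (m - 1) j i)
          - X * fGF (m - 1) r r := by
  refine ⟨?_, fun m r hm hr hrm => ?_⟩
  · rw [show fGF 0 0 0 = mk fun n => (cA n 0 0 0 : ℚ) by simpa using fGF_natCast 0 0 0]
    refine (one_sub_X_mul_mk_eq_X_mul (g := 1) ?_ ?_).trans (mul_one X)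
    · simp [cA_zero_left]
    · rintro (_ | n) <;> simp [cA_zero_left, cA_zero_zero_zero, coeff_one]
  · lift r to ℕ using by omega
    obtain ⟨M, rfl⟩ : ∃ M : ℕ, m = M + 1 := ⟨(m - 1).toNat, by omega⟩
    rw [add_sub_cancel_right, ← Nat.cast_add_one, ← mul_sub]
    simp only [sum_Icc_zero_natCast, fGF_natCast]
    apply one_sub_X_mul_mk_eq_X_mul
    · simp [cA_zero_left]
    · intro n
      have := congrArg (Nat.cast : ℕ → ℚ) (cA_diag_recurrence n (by omega : r ≤ M + 1))
      push_cast at this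
      simp only [coeff_mk, map_sub, map_sum]
      linarith
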